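/- Let φ: ℝ → ℝ be C¹ with φ' continuous, nondecreasing, and bounded on ℝ₊, let η_ref > 0, and suppose ℝ₊ is partitioned into m+1 consecutive intervals with m = ⌈ℓ(φ'(ℝ₊))/(2η_ref)⌉ − 1 ≥ 0, such that the image of φ' is uniformly divided (each interval's image under φ' has length ℓ(φ'(ℝ₊))/(m+1)). Define on each interval R_i the affine map q ↦ r_i q + s_i with r_i = (sup_{int R_i} φ' + inf_{int R_i} φ')/2, and choose s_i so that the resulting piecewise-affine function φ_PWA is continuous. Then ε = φ − φ_PWA is Lipschitz on ℝ₊ with constant η = ℓ(φ'(ℝ₊))/(2(m+1)) ≤ η_ref. -/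

import Mathlib

/-!
On each piece `R i` the slope `r i` is the midpoint of the range of `φ'` over the piece, and by
continuity `φ'` stays within that range on the closed piece, so the derivative of `φ - φ_PWA`
there is at most half the oscillation of `φ'` on `R i`, which by uniformity is
`ℓ(φ'(ℝ₊)) / (2 (m + 1))`. The mean value theorem makes the error Lipschitz with this constant
on every piece, and consecutive pieces share an endpoint, so the constant survives gluing. Finally
`m + 1 = ⌈ℓ / (2 η_ref)⌉` gives `ℓ / (2 (m + 1)) ≤ η_ref`.
-/

open Set
open scoped NNReal

theorem monotoneOn_nat_Iic_of_le_succ {α : Type*} [Preorder α] {f : ℕ → α} {n : ℕ}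
    (hf : ∀ i < n, f i ≤ f (i + 1)) : MonotoneOn f (Iic n) := by
  intro i _ j hj hij
  induction j, hij using Nat.le_induction with
  | base => exact le_rfl
  | succ k _ ih => exact (ih (Nat.le_of_succ_le hj)).trans (hf k hj)

theorem div_natCeil_div_le {x y : ℝ} (hy : 0 < y) (hceil : 0 < ⌈x / y⌉₊) : x / ⌈x / y⌉₊ ≤ y := by
  rw [div_le_iff₀ (by exact_mod_cast hceil), mul_comm, ← div_le_iff₀ hy]
  exact Nat.le_ceil _

theorem Continuous.mem_Icc_csInf_csSup_image {α β : Type*} [TopologicalSpace α]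
    [ConditionallyCompleteLinearOrder β] [TopologicalSpace β] [OrderTopology β] {g : α → β}
    (hg : Continuous g) {t : Set α} (hb : BddBelow (g '' t)) (ha : BddAbove (g '' t)) {x : α}
    (hx : x ∈ closure t) : g x ∈ Icc (sInf (g '' t)) (sSup (g '' t)) :=
  closure_minimal (subset_Icc_csInf_csSup hb ha) isClosed_Icc
    (image_closure_subset_closure_image hg (mem_image_of_mem g hx))

section Lipschitz

variable {E : Type*} [PseudoMetricSpace E] {f : ℝ → E} {K : ℝ≥0}

theorem LipschitzOnWith.union_of_le_of_le {s t : Set ℝ} {c : ℝ} (hcs : c ∈ s) (hct : c ∈ t)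
    (hs : ∀ x ∈ s, x ≤ c) (ht : ∀ y ∈ t, c ≤ y)
    (hfs : LipschitzOnWith K f s) (hft : LipschitzOnWith K f t) :
    LipschitzOnWith K f (s ∪ t) := by
  have across : ∀ x ∈ s, ∀ y ∈ t, dist (f x) (f y) ≤ K * dist x y := fun x hx y hy =>
    calc dist (f x) (f y) ≤ dist (f x) (f c) + dist (f c) (f y) := dist_triangle _ _ _
      _ ≤ K * dist x c + K * dist c y :=
          add_le_add (hfs.dist_le_mul x hx c hcs) (hft.dist_le_mul c hct y hy)
      _ = K * dist x y := by
          rw [← mul_add, dist_add_dist_of_mem_segment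
            (segment_eq_uIcc x y ▸ Icc_subset_uIcc ⟨hs x hx, ht y hy⟩)]
  rw [lipschitzOnWith_iff_dist_le_mul]
  rintro x (hx | hx) y (hy | hy)
  · exact hfs.dist_le_mul x hx y hy
  · exact across x hx y hy
  · rw [dist_comm, dist_comm x]
    exact across y hy x hx
  · exact hft.dist_le_mul x hx y hy

theorem LipschitzOnWith.Icc_of_Icc_succ {a : ℕ → ℝ} {n : ℕ} (ha : ∀ i < n, a i ≤ a (i + 1))
    (hf : ∀ i < n, LipschitzOnWith K f (Icc (a i) (a (i + 1)))) :
    LipschitzOnWith K f (Icc (a 0) (a n)) := by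
  induction n with
  | zero => simp [Icc_self, LipschitzOnWith]
  | succ n ih =>
    have h0n : a 0 ≤ a n := monotoneOn_nat_Iic_of_le_succ ha (Nat.zero_le _) (Nat.le_succ n)
      (Nat.zero_le n)
    have hstep : a n ≤ a (n + 1) := ha n n.lt_succ_self
    rw [← Icc_union_Icc_eq_Icc h0n hstep]
    exact (ih (fun i hi => ha i (Nat.lt_succ_of_lt hi))
      (fun i hi => hf i (Nat.lt_succ_of_lt hi))).union_of_le_of_le
      (right_mem_Icc.2 h0n) (left_mem_Icc.2 hstep) (fun _ hx => hx.2) (fun _ hy => hy.1)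
      (hf n n.lt_succ_self)

end Lipschitz

theorem Convex.lipschitzOnWith_sub_affine {f g : ℝ → ℝ} {s : Set ℝ} {c d δ : ℝ}
    (hs : Convex ℝ s) (hf : Differentiable ℝ f) (hg : ∀ x ∈ s, g x = c * x + d)
    (hδ : ∀ x ∈ s, |deriv f x - c| ≤ δ) :
    LipschitzOnWith δ.toNNReal (fun x => f x - g x) s := by
  refine hs.lipschitzOnWith_of_nnnorm_hasDerivWithin_le (f' := fun x => deriv f x - c)
    (fun x hx => ?_) (fun x hx => ?_)
  · have haffine : HasDerivWithinAt (fun y => c * y + d) c s x := by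
      simpa using (((hasDerivAt_id x).const_mul c).add_const d).hasDerivWithinAt
    exact (hf x).hasDerivAt.hasDerivWithinAt.sub (haffine.congr hg (hg x hx))
  · rw [← NNReal.coe_le_coe, coe_nnnorm, Real.coe_toNNReal', Real.norm_eq_abs]
    exact le_max_of_le_left (hδ x hx)

theorem Convex.lipschitzOnWith_sub_midslope {f g : ℝ → ℝ} {s : Set ℝ} {d : ℝ}
    (hs : Convex ℝ s) (hs' : (interior s).Nonempty) (hf : ContDiff ℝ 1 f)
    (hb : BddBelow (deriv f '' interior s)) (ha : BddAbove (deriv f '' interior s))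
    (hg : ∀ x ∈ s,
      g x = (sSup (deriv f '' interior s) + sInf (deriv f '' interior s)) / 2 * x + d) :
    LipschitzOnWith ((sSup (deriv f '' interior s) - sInf (deriv f '' interior s)) / 2).toNNReal
      (fun x => f x - g x) s := by
  refine hs.lipschitzOnWith_sub_affine (hf.differentiable one_ne_zero) hg fun x hx => ?_
  have hx' : x ∈ closure (interior s) := by
    rw [hs.closure_interior_eq_closure_of_nonempty_interior hs']
    exact subset_closure hx
  have hrange := (hf.continuous_deriv le_rfl).mem_Icc_csInf_csSup_image hb ha hx'
  rw [abs_sub_le_iff]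
  constructor <;> linarith [hrange.1, hrange.2]

def partitionPiece (a : ℕ → ℝ) (m i : ℕ) : Set ℝ :=
  if i < m then Icc (a i) (a (i + 1)) else Ici (a i)

section Partition

variable {a : ℕ → ℝ} {m i : ℕ}

theorem partitionPiece_of_lt (hi : i < m) : partitionPiece a m i = Icc (a i) (a (i + 1)) :=
  if_pos hi

theorem partitionPiece_self : partitionPiece a m m = Ici (a m) :=
  if_neg (lt_irrefl m)

theorem convex_partitionPiece : Convex ℝ (partitionPiece a m i) := by
  unfold partitionPiece
  split_ifs
  exacts [convex_Icc _ _, convex_Ici _]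

theorem interior_partitionPiece_nonempty (ha : ∀ i < m, a i < a (i + 1)) :
    (interior (partitionPiece a m i)).Nonempty := by
  unfold partitionPiece
  split_ifs with h
  · simpa using ha i h
  · simp

theorem partitionPiece_subset_Ici (ha : ∀ i < m, a i ≤ a (i + 1)) (hi : i ≤ m) :
    partitionPiece a m i ⊆ Ici (a 0) := by
  have h0i : a 0 ≤ a i := monotoneOn_nat_Iic_of_le_succ ha (Nat.zero_le m) hi (Nat.zero_le i)
  unfold partitionPiece
  split_ifs
  exacts [fun x hx => h0i.trans hx.1, Ici_subset_Ici.2 h0i]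

theorem LipschitzOnWith.Ici_of_partitionPiece {E : Type*} [PseudoMetricSpace E] {f : ℝ → E}
    {K : ℝ≥0} (ha : ∀ i < m, a i ≤ a (i + 1))
    (hf : ∀ i ≤ m, LipschitzOnWith K f (partitionPiece a m i)) :
    LipschitzOnWith K f (Ici (a 0)) := by
  have h0m : a 0 ≤ a m :=
    monotoneOn_nat_Iic_of_le_succ ha (Nat.zero_le m) (le_refl m) (Nat.zero_le m)
  have hfirst : LipschitzOnWith K f (Icc (a 0) (a m)) :=
    .Icc_of_Icc_succ ha fun i hi => partitionPiece_of_lt hi ▸ hf i hi.le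
  rw [← Icc_union_Ici_eq_Ici h0m]
  exact hfirst.union_of_le_of_le (right_mem_Icc.2 h0m) self_mem_Ici (fun _ hx => hx.2)
    (fun _ hy => hy) (partitionPiece_self ▸ hf m le_rfl)

end Partition

theorem uniform_partition_pwa_error_bound_general
    (φ : ℝ → ℝ) (hφ : ContDiff ℝ 1 φ)
    (hmono : MonotoneOn (deriv φ) (Ici (0 : ℝ)))
    (hbdd : BddAbove (deriv φ '' Ici (0 : ℝ)))
    (ηref : ℝ) (hηref : 0 < ηref)
    (L : ℝ)
    (m : ℕ) (hceil : 1 ≤ ⌈L / (2 * ηref)⌉₊) (hm : m = ⌈L / (2 * ηref)⌉₊ - 1)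
    (a : ℕ → ℝ) (ha0 : a 0 = 0) (hainc : ∀ i < m, a i < a (i + 1))
    (R : ℕ → Set ℝ)
    (hR : ∀ i, R i = if i < m then Icc (a i) (a (i + 1)) else Ici (a i))
    (huniform : ∀ i ≤ m,
      sSup (deriv φ '' interior (R i)) - sInf (deriv φ '' interior (R i)) = L / (m + 1))
    (r s : ℕ → ℝ)
    (hr : ∀ i ≤ m,
      r i = (sSup (deriv φ '' interior (R i)) + sInf (deriv φ '' interior (R i))) / 2)
    (φPWA : ℝ → ℝ)
    (hφPWA : ∀ i ≤ m, ∀ q ∈ R i, φPWA q = r i * q + s i) :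
    (∀ q ∈ Ici (0 : ℝ), ∀ q' ∈ Ici (0 : ℝ),
        |(φ q - φPWA q) - (φ q' - φPWA q')| ≤ (L / (2 * (m + 1))) * |q - q'|)
      ∧ L / (2 * (m + 1)) ≤ ηref := by
  have ha : ∀ i < m, a i ≤ a (i + 1) := fun i hi => (hainc i hi).le
  obtain rfl : R = partitionPiece a m := funext hR
  have hbddBelow : BddBelow (deriv φ '' Ici 0) :=
    ⟨deriv φ 0, forall_mem_image.2 fun _ hx => hmono self_mem_Ici hx hx⟩
  have hbounds : ∀ i ≤ m, BddBelow (deriv φ '' interior (partitionPiece a m i)) ∧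
      BddAbove (deriv φ '' interior (partitionPiece a m i)) := fun i hi =>
    have hsub := image_mono (f := deriv φ)
      (interior_subset.trans (ha0 ▸ partitionPiece_subset_Ici ha hi))
    ⟨hbddBelow.mono hsub, hbdd.mono hsub⟩
  set η := L / (2 * (m + 1)) with hη_def
  have hη_half : ∀ i ≤ m, η = (sSup (deriv φ '' interior (partitionPiece a m i)) -
      sInf (deriv φ '' interior (partitionPiece a m i))) / 2 := fun i hi => by
    rw [huniform i hi, div_div, mul_comm]
  have hη : 0 ≤ η := by
    have := csInf_le_csSup ((interior_partitionPiece_nonempty hainc).image _)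
      (hbounds 0 m.zero_le).1 (hbounds 0 m.zero_le).2
    linarith [hη_half 0 m.zero_le]
  have hglued : LipschitzOnWith η.toNNReal (fun q => φ q - φPWA q) (Ici (a 0)) := by
    refine .Ici_of_partitionPiece ha fun i hi => ?_
    rw [hη_half i hi]
    exact convex_partitionPiece.lipschitzOnWith_sub_midslope
      (interior_partitionPiece_nonempty hainc) hφ (hbounds i hi).1 (hbounds i hi).2
      fun q hq => by rw [hφPWA i hi q hq, hr i hi]
  refine ⟨fun q hq q' hq' => ?_, ?_⟩
  · have := hglued.dist_le_mul q (ha0 ▸ hq) q' (ha0 ▸ hq')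
    rwa [Real.dist_eq, Real.dist_eq, Real.coe_toNNReal _ hη] at this
  · have hm1 : ((m : ℝ) + 1) = ⌈L / 2 / ηref⌉₊ := by
      rw [div_div]
      exact_mod_cast (by omega : m + 1 = ⌈L / (2 * ηref)⌉₊)
    rw [hη_def, ← div_div, hm1]
    exact div_natCeil_div_le hηref (by rwa [div_div])

theorem uniform_partition_pwa_error_bound
    (φ : ℝ → ℝ) (hφ : ContDiff ℝ 1 φ)
    (hmono : MonotoneOn (deriv φ) (Ici (0 : ℝ)))
    (hbdd : BddAbove (deriv φ '' Ici (0 : ℝ)))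
    (ηref : ℝ) (hηref : 0 < ηref)
    (L : ℝ)
    (hL : L = sSup (deriv φ '' Ici (0 : ℝ)) - sInf (deriv φ '' Ici (0 : ℝ)))
    (m : ℕ) (hceil : 1 ≤ ⌈L / (2 * ηref)⌉₊) (hm : m = ⌈L / (2 * ηref)⌉₊ - 1)
    (a : ℕ → ℝ) (ha0 : a 0 = 0) (hainc : ∀ i < m, a i < a (i + 1))
    (R : ℕ → Set ℝ)
    (hR : ∀ i, R i = if i < m then Icc (a i) (a (i + 1)) else Ici (a i))
    (huniform : ∀ i ≤ m,
      sSup (deriv φ '' interior (R i)) - sInf (deriv φ '' interior (R i)) = L / (m + 1))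
    (r s : ℕ → ℝ)
    (hr : ∀ i ≤ m,
      r i = (sSup (deriv φ '' interior (R i)) + sInf (deriv φ '' interior (R i))) / 2)
    (φPWA : ℝ → ℝ)
    (hφPWA : ∀ i ≤ m, ∀ q ∈ R i, φPWA q = r i * q + s i)
    (hcontPWA : ContinuousOn φPWA (Ici (0 : ℝ))) :
    (∀ q ∈ Ici (0 : ℝ), ∀ q' ∈ Ici (0 : ℝ),
        |(φ q - φPWA q) - (φ q' - φPWA q')| ≤ (L / (2 * (m + 1))) * |q - q'|)
      ∧ L / (2 * (m + 1)) ≤ ηref :=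
  uniform_partition_pwa_error_bound_general φ hφ hmono hbdd ηref hηref L m hceil hm a ha0 hainc R hR
    huniform r s hr φPWA hφPWA
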